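/- arXiv:1302.1146 — 3 statements merged into one kernel-verified Lean document; each statement's English description precedes it below -/
import Mathlib

section
/- The group presented on six generators a, b, c, d, e, f with the six relations a·e·b⁻¹ = 1, b·f·c⁻¹ = 1, c·d·a⁻¹ = 1, a⁻¹·d·b = 1, b⁻¹·e·c = 1, c⁻¹·f·a = 1 (the trefoil template presentation) is isomorphic to the group presented on two generators x, y with the single relation x·y·x = y·x·y (the trefoil knot group). -/
/-- The six relations of the trefoil template presentation on generators
`a, b, c, d, e, f` (encoded as `0, …, 5 : Fin 6`):
`a·e·b⁻¹`, `b·f·c⁻¹`, `c·d·a⁻¹`, `a⁻¹·d·b`, `b⁻¹·e·c`, `c⁻¹·f·a`. -/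
def trefoilTemplateRels : Set (FreeGroup (Fin 6)) :=
  let a := FreeGroup.of (0 : Fin 6)
  let b := FreeGroup.of (1 : Fin 6)
  let c := FreeGroup.of (2 : Fin 6)
  let d := FreeGroup.of (3 : Fin 6)
  let e := FreeGroup.of (4 : Fin 6)
  let f := FreeGroup.of (5 : Fin 6)
  {a * e * b⁻¹, b * f * c⁻¹, c * d * a⁻¹, a⁻¹ * d * b, b⁻¹ * e * c, c⁻¹ * f * a}

/-- The single relation `x·y·x·(y·x·y)⁻¹` of the trefoil knot group on
generators `x, y` (encoded as `0, 1 : Fin 2`). -/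
def trefoilKnotRels : Set (FreeGroup (Fin 2)) :=
  let x := FreeGroup.of (0 : Fin 2)
  let y := FreeGroup.of (1 : Fin 2)
  {x * y * x * (y * x * y)⁻¹}

/-! Tietze elimination: the relations `a·e·b⁻¹`, `a⁻¹·d·b` and `b⁻¹·e·c` solve for
`e = a⁻¹b`, `d = ab⁻¹` and `c = b⁻¹ab`; then `c·d·a⁻¹` says that also `c = aba⁻¹`, which is
the braid relation `aba = bab`, `b·f·c⁻¹` solves for `f`, and `c⁻¹·f·a` becomes redundant.
So the template group is generated by `a, b` subject only to `aba = bab`. -/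

namespace PresentedGroup

variable {α : Type*} {rels : Set (FreeGroup α)}

theorem lift_of_apply (x : FreeGroup α) :
    FreeGroup.lift (of : α → PresentedGroup rels) x = mk rels x :=
  (FreeGroup.lift_unique (mk rels) fun _ ↦ rfl).symm

theorem lift_of_eq_one_of_mem {r : FreeGroup α} (hr : r ∈ rels) :
    FreeGroup.lift (of : α → PresentedGroup rels) r = 1 := by
  rw [lift_of_apply, one_of_mem hr]

end PresentedGroup

section

variable {G : Type*} [Group G]

theorem forall_lift_trefoilTemplateRels_eq_one_iff (g : Fin 6 → G) :
    (∀ r ∈ trefoilTemplateRels, FreeGroup.lift g r = 1) ↔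
      g 0 * g 4 * (g 1)⁻¹ = 1 ∧ g 1 * g 5 * (g 2)⁻¹ = 1 ∧ g 2 * g 3 * (g 0)⁻¹ = 1 ∧
        (g 0)⁻¹ * g 3 * g 1 = 1 ∧ (g 1)⁻¹ * g 4 * g 2 = 1 ∧ (g 2)⁻¹ * g 5 * g 0 = 1 := by
  simp only [trefoilTemplateRels, Set.mem_insert_iff, Set.mem_singleton_iff, forall_eq_or_imp,
    forall_eq, map_mul, map_inv, FreeGroup.lift_apply_of]

theorem forall_lift_trefoilKnotRels_eq_one_iff (g : Fin 2 → G) :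
    (∀ r ∈ trefoilKnotRels, FreeGroup.lift g r = 1) ↔ g 0 * g 1 * g 0 = g 1 * g 0 * g 1 := by
  simp only [trefoilKnotRels, Set.mem_singleton_iff, forall_eq, map_mul, map_inv,
    FreeGroup.lift_apply_of, mul_inv_eq_one]

theorem conj_eq_conj_inv_iff_braid {a b : G} :
    a * b * a⁻¹ = b⁻¹ * a * b ↔ a * b * a = b * a * b := by
  rw [mul_inv_eq_iff_eq_mul, mul_assoc b⁻¹, mul_assoc b⁻¹, eq_inv_mul_iff_mul_eq, ← mul_assoc,
    eq_comm]

theorem trefoil_template_relations_iff {a b c d e f : G} :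
    (a * e * b⁻¹ = 1 ∧ b * f * c⁻¹ = 1 ∧ c * d * a⁻¹ = 1 ∧
        a⁻¹ * d * b = 1 ∧ b⁻¹ * e * c = 1 ∧ c⁻¹ * f * a = 1) ↔
      a * b * a = b * a * b ∧ c = a * b * a⁻¹ ∧ d = a * b⁻¹ ∧ e = a⁻¹ * b ∧
        f = b⁻¹ * a * b * a⁻¹ := by
  constructor
  · rintro ⟨h₁, h₂, h₃, h₄, h₅, -⟩
    have he : e = a⁻¹ * b := eq_inv_mul_of_mul_eq (mul_inv_eq_one.1 h₁)
    have hd : d = a * b⁻¹ := inv_mul_eq_iff_eq_mul.1 (mul_eq_one_iff_eq_inv.1 h₄)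
    have hc : c = b⁻¹ * a * b := by
      rw [← inv_eq_of_mul_eq_one_right h₅, he]; group
    have hc' : c = a * b * a⁻¹ := by
      rw [eq_mul_inv_of_mul_eq (mul_inv_eq_one.1 h₃), hd]; group
    have hf : f = b⁻¹ * a * b * a⁻¹ := by
      rw [eq_inv_mul_of_mul_eq (mul_inv_eq_one.1 h₂), hc']; group
    exact ⟨conj_eq_conj_inv_iff_braid.1 (hc'.symm.trans hc), hc', hd, he, hf⟩
  · rintro ⟨hab, rfl, rfl, rfl, rfl⟩
    have hc := conj_eq_conj_inv_iff_braid.2 hab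
    refine ⟨by group, by group, by group, by group, ?_, ?_⟩ <;> rw [hc] <;> group

end

open PresentedGroup

theorem trefoilTemplate_of_relations :
    let a : PresentedGroup trefoilTemplateRels := of 0
    let b : PresentedGroup trefoilTemplateRels := of 1
    a * b * a = b * a * b ∧ of 2 = a * b * a⁻¹ ∧ of 3 = a * b⁻¹ ∧ of 4 = a⁻¹ * b ∧
      of 5 = b⁻¹ * a * b * a⁻¹ :=
  trefoil_template_relations_iff.1 <|
    (forall_lift_trefoilTemplateRels_eq_one_iff of).1 fun _ ↦ lift_of_eq_one_of_mem

theorem trefoilKnot_of_braid :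
    (of 0 * of 1 * of 0 : PresentedGroup trefoilKnotRels) = of 1 * of 0 * of 1 :=
  (forall_lift_trefoilKnotRels_eq_one_iff of).1 fun _ ↦ lift_of_eq_one_of_mem

def trefoilTemplateToKnot : PresentedGroup trefoilTemplateRels →* PresentedGroup trefoilKnotRels :=
  let x : PresentedGroup trefoilKnotRels := of 0
  let y : PresentedGroup trefoilKnotRels := of 1
  toGroup (f := ![x, y, x * y * x⁻¹, x * y⁻¹, x⁻¹ * y, y⁻¹ * x * y * x⁻¹]) <|
    (forall_lift_trefoilTemplateRels_eq_one_iff _).2 <|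
      trefoil_template_relations_iff.2 ⟨trefoilKnot_of_braid, rfl, rfl, rfl, rfl⟩

def trefoilKnotToTemplate : PresentedGroup trefoilKnotRels →* PresentedGroup trefoilTemplateRels :=
  toGroup (f := ![of 0, of 1]) <|
    (forall_lift_trefoilKnotRels_eq_one_iff _).2 trefoilTemplate_of_relations.1

theorem trefoilKnotToTemplate_comp_trefoilTemplateToKnot :
    trefoilKnotToTemplate.comp trefoilTemplateToKnot = .id _ := by
  obtain ⟨-, hc, hd, he, hf⟩ := trefoilTemplate_of_relations
  ext i
  fin_cases i <;> simp [trefoilTemplateToKnot, trefoilKnotToTemplate, toGroup.of, hc, hd, he, hf]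

theorem trefoilTemplateToKnot_comp_trefoilKnotToTemplate :
    trefoilTemplateToKnot.comp trefoilKnotToTemplate = .id _ := by
  ext i
  fin_cases i <;> simp [trefoilTemplateToKnot, trefoilKnotToTemplate, toGroup.of]

/-- The trefoil template presentation
`⟨a,b,c,d,e,f | a·e·b⁻¹, b·f·c⁻¹, c·d·a⁻¹, a⁻¹·d·b, b⁻¹·e·c, c⁻¹·f·a⟩`
is isomorphic to the trefoil knot group `⟨x, y | x·y·x = y·x·y⟩`. -/
theorem trefoil_template_iso_trefoil_knot_group :
    Nonempty (PresentedGroup trefoilTemplateRels ≃* PresentedGroup trefoilKnotRels) :=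
  ⟨trefoilTemplateToKnot.toMulEquiv trefoilKnotToTemplate
    trefoilKnotToTemplate_comp_trefoilTemplateToKnot
    trefoilTemplateToKnot_comp_trefoilKnotToTemplate⟩
end

section
/- The group presented on two generators x, y with the single relation x·y·x = y·x·y (the trefoil knot group) is not abelian; in particular it is not isomorphic to the additive group of integers ℤ. -/
theorem isEmpty_mulEquiv_of_not_commute {G H : Type*} [Group G] [CommGroup H] {g h : G}
    (hgh : ¬Commute g h) : IsEmpty (G ≃* H) :=
  ⟨fun e => hgh <| by simpa using (Commute.all (e g) (e h)).map e.symm⟩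

namespace Trefoil

variable {G : Type*} [Group G]

def lift (a b : G) (hab : a * b * a = b * a * b) : PresentedGroup trefoilKnotRels →* G :=
  PresentedGroup.toGroup (f := ![a, b]) <| by
    rintro r rfl
    simp [hab]

theorem lift_of_zero (a b : G) (hab : a * b * a = b * a * b) :
    lift a b hab (PresentedGroup.of 0) = a :=
  PresentedGroup.toGroup.of _

theorem lift_of_one (a b : G) (hab : a * b * a = b * a * b) :
    lift a b hab (PresentedGroup.of 1) = b :=
  PresentedGroup.toGroup.of _

theorem not_commute_of_braid_of_not_commute {a b : G} (hab : a * b * a = b * a * b)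
    (hcomm : ¬Commute a b) :
    ¬Commute (PresentedGroup.of 0 : PresentedGroup trefoilKnotRels) (PresentedGroup.of 1) := by
  intro h
  have := h.map (lift a b hab)
  rw [lift_of_zero, lift_of_one] at this
  exact hcomm this

theorem not_commute_generators :
    ¬Commute (PresentedGroup.of 0 : PresentedGroup trefoilKnotRels) (PresentedGroup.of 1) :=
  not_commute_of_braid_of_not_commute (a := Equiv.swap (0 : Fin 3) 1) (b := Equiv.swap 1 2)
    (by decide) fun h => absurd h.eq (by decide)

end Trefoil

/-- The trefoil knot group `⟨x, y | x·y·x = y·x·y⟩` is not abelian; in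
particular it is not isomorphic to the (additive) group of integers `ℤ`. -/
theorem trefoil_knot_group_not_abelian_not_int :
    (∃ g h : PresentedGroup trefoilKnotRels, g * h ≠ h * g) ∧
    IsEmpty (PresentedGroup trefoilKnotRels ≃* Multiplicative ℤ) :=
  ⟨⟨_, _, Trefoil.not_commute_generators⟩,
    isEmpty_mulEquiv_of_not_commute Trefoil.not_commute_generators⟩
end

section
/- The group presented on six generators a, b, c, d, e, f with relations a·e·b⁻¹, b·f·c⁻¹, c·d·a⁻¹, a⁻¹·d·b, b⁻¹·e·c, c⁻¹·f·a (the trefoil template presentation) is not isomorphic to the group presented on six generators a, b, c, d, e, f with relations a, b, b·e⁻¹, a·d⁻¹, c·d·b·f·c⁻¹·a⁻¹, b⁻¹·c⁻¹·f·a·e·c (the unknot template presentation); that is, the template's presentation of the fundamental group distinguishes the trefoil from this presentation of the unknot. -/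
/-- The six relations of the unknot template presentation on generators
`a, b, c, d, e, f` (encoded as `0, …, 5 : Fin 6`):
`a`, `b`, `b·e⁻¹`, `a·d⁻¹`, `c·d·b·f·c⁻¹·a⁻¹`, `b⁻¹·c⁻¹·f·a·e·c`. -/
def unknotTemplateRels : Set (FreeGroup (Fin 6)) :=
  let a := FreeGroup.of (0 : Fin 6)
  let b := FreeGroup.of (1 : Fin 6)
  let c := FreeGroup.of (2 : Fin 6)
  let d := FreeGroup.of (3 : Fin 6)
  let e := FreeGroup.of (4 : Fin 6)
  let f := FreeGroup.of (5 : Fin 6)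
  {a, b, b * e⁻¹, a * d⁻¹, c * d * b * f * c⁻¹ * a⁻¹, b⁻¹ * c⁻¹ * f * a * e * c}

/-!
The trefoil template group is not abelian: sending `a, b, c` to the three transpositions of `S₃`
(a Fox 3-colouring of the trefoil diagram) and `d, e, f` to a 3-cycle respects its relations,
and the images of `a` and `b` do not commute. In the unknot template group the relations kill
every generator except `c`, so it is cyclic. Being cyclic is invariant under isomorphism.
-/

namespace PresentedGroup

variable {α : Type*} {rels : Set (FreeGroup α)}

theorem isCyclic_of_forall_of_mem_zpowers (g : PresentedGroup rels)
    (h : ∀ i, of i ∈ Subgroup.zpowers g) : IsCyclic (PresentedGroup rels) :=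
  ⟨g, fun x => Subgroup.mem_zpowers_iff.mp (generated_by rels _ h x)⟩

end PresentedGroup

theorem MonoidHom.not_isCyclic_of_map_mul_ne {G H : Type*} [Group G] [Group H] (f : G →* H)
    {x y : G} (hxy : f x * f y ≠ f y * f x) : ¬IsCyclic G := by
  intro _
  apply hxy
  rw [← map_mul, ← map_mul, mul_comm']

open PresentedGroup

def trefoilTemplateToPerm : Fin 6 → Equiv.Perm (Fin 3)
  | 0 => Equiv.swap 0 1
  | 1 => Equiv.swap 1 2
  | 2 => Equiv.swap 0 2
  | _ => Equiv.swap 0 1 * Equiv.swap 1 2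

theorem trefoilTemplateToPerm_rels :
    ∀ r ∈ trefoilTemplateRels, FreeGroup.lift trefoilTemplateToPerm r = 1 := by
  simp only [trefoilTemplateRels, Set.mem_insert_iff, Set.mem_singleton_iff, forall_eq_or_imp,
    forall_eq, map_mul, map_inv, FreeGroup.lift_apply_of]
  decide

theorem not_isCyclic_trefoilTemplate : ¬IsCyclic (PresentedGroup trefoilTemplateRels) :=
  (toGroup trefoilTemplateToPerm_rels).not_isCyclic_of_map_mul_ne (x := of 0) (y := of 1) <| by
    simp only [toGroup.of]
    decide

theorem unknotTemplate_of_eq_one {i : Fin 6} (hi : i ≠ 2) :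
    (of i : PresentedGroup unknotTemplateRels) = 1 := by
  have ha : (of 0 : PresentedGroup unknotTemplateRels) = 1 :=
    one_of_mem (by simp [unknotTemplateRels])
  have hb : (of 1 : PresentedGroup unknotTemplateRels) = 1 :=
    one_of_mem (by simp [unknotTemplateRels])
  have hbe : (of 1 : PresentedGroup unknotTemplateRels) = of 4 :=
    mk_eq_mk_of_mul_inv_mem (by simp [unknotTemplateRels])
  have had : (of 0 : PresentedGroup unknotTemplateRels) = of 3 :=
    mk_eq_mk_of_mul_inv_mem (by simp [unknotTemplateRels])
  have hf : (of 2 * of 3 * of 1 * of 5 : PresentedGroup unknotTemplateRels) = of 0 * of 2 :=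
    mk_eq_mk_of_mul_inv_mem (by simp [unknotTemplateRels, mul_assoc])
  rw [← had, ha, hb, mul_one, mul_one, one_mul, mul_eq_left] at hf
  fin_cases i
  exacts [ha, hb, absurd rfl hi, had ▸ ha, hbe ▸ hb, hf]

theorem isCyclic_unknotTemplate : IsCyclic (PresentedGroup unknotTemplateRels) :=
  isCyclic_of_forall_of_mem_zpowers (of 2) fun i => by
    by_cases hi : i = 2
    · exact hi ▸ Subgroup.mem_zpowers _
    · exact unknotTemplate_of_eq_one hi ▸ one_mem _

/-- The trefoil template presentation is not isomorphic to the unknot template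
presentation: the template's presentation of the fundamental group
distinguishes the trefoil from this presentation of the unknot. -/
theorem trefoil_template_not_iso_unknot_template :
    IsEmpty (PresentedGroup trefoilTemplateRels ≃* PresentedGroup unknotTemplateRels) :=
  ⟨fun e => not_isCyclic_trefoilTemplate (e.isCyclic.mpr isCyclic_unknotTemplate)⟩
end
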